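/- For any C-sequence over κ, the number-of-steps function ρ₂ : [κ]² → ω is closed: for all β < κ and i ≤ ω, the set D_{≤i}(β) := {α < β : ρ₂(α,β) ≤ i} contains all of its accumulation points below β; that is, if A ⊆ D_{≤i}(β) and sup(A) = γ < β with γ a limit of A, then ρ₂(γ, β) ≤ i. -/

import Mathlib

open Cardinal Set Ordinal

noncomputable section

/-- `s` (a set in a `Type 1`, such as a set of ordinals) has small cardinality `μ`. -/
def HasCard {α : Type 1} (s : Set α) (μ : Cardinal.{0}) : Prop :=
  Cardinal.mk s = Cardinal.lift.{1, 0} μ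

/-- `a < b` for sets of ordinals: every element of `a` is below every element of `b`. -/
def SetLT (a b : Set Ordinal) : Prop := ∀ α ∈ a, ∀ β ∈ b, α < β

/-- `A` is a family of `κ`-many pairwise disjoint subsets of `κ`, each of cardinality `χ'`. -/
def IsDisjFamily (κ χ' : Cardinal) (A : Set (Set Ordinal)) : Prop :=
  (∀ a ∈ A, a ⊆ Set.Iio κ.ord ∧ HasCard a χ') ∧
    A.PairwiseDisjoint id ∧ HasCard A κ

/-- `A` is a family of `κ`-many pairwise disjoint subsets of `κ`, each of cardinality `< χ`. -/
def IsDisjFamilyLT (κ χ : Cardinal) (A : Set (Set Ordinal)) : Prop :=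
  (∀ a ∈ A, a ⊆ Set.Iio κ.ord ∧ Cardinal.mk a < Cardinal.lift.{1, 0} χ) ∧
    A.PairwiseDisjoint id ∧ HasCard A κ

/-- `c` is a coloring of pairs of ordinals below `κ` with colors `< θ`. -/
def IsColoring (κ θ : Cardinal) (c : Ordinal → Ordinal → Ordinal) : Prop :=
  ∀ α β : Ordinal, α < β → β < κ.ord → c α β < θ.ord

/-- `c` witnesses `U(κ, μ, θ, χ)`. -/
def WitnessU (κ μ θ χ : Cardinal) (c : Ordinal → Ordinal → Ordinal) : Prop :=
  IsColoring κ θ c ∧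
    ∀ χ' < χ, ∀ A : Set (Set Ordinal), IsDisjFamily κ χ' A →
      ∀ i < θ.ord, ∃ B ⊆ A, HasCard B μ ∧
        ∀ a ∈ B, ∀ b ∈ B, SetLT a b → ∀ α ∈ a, ∀ β ∈ b, i < c α β

/-- The principle `U(κ, μ, θ, χ)`. -/
def U (κ μ θ χ : Cardinal) : Prop := ∃ c, WitnessU κ μ θ χ c

/-- `D` is a club in (the ordinal) `o`: a closed and unbounded subset of `o`. -/
def IsClubOrd (D : Set Ordinal) (o : Ordinal) : Prop :=
  D ⊆ Set.Iio o ∧ (∀ α < o, ∃ β ∈ D, α ≤ β) ∧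
    ∀ γ < o, 0 < γ → (∀ x < γ, ∃ β ∈ D, x < β ∧ β < γ) → γ ∈ D

/-- `S` is stationary in `o`: it meets every club in `o`. -/
def IsStationaryOrd (S : Set Ordinal) (o : Ordinal) : Prop :=
  ∀ D, IsClubOrd D o → (S ∩ D).Nonempty

/-- A `C`-sequence over `κ`. -/
def IsCSeq (κ : Cardinal) (C : Ordinal → Set Ordinal) : Prop :=
  C 0 = ∅ ∧ (∀ α, C (α + 1) = {α}) ∧
    ∀ α < κ.ord, Order.IsSuccLimit α → IsClubOrd (C α) α

/-- The walk `Tr(α,β)` from `β` down to `α` along the `C`-sequence `C`. -/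
def walk (C : Ordinal → Set Ordinal) (α β : Ordinal) : ℕ → Ordinal
  | 0 => β
  | n + 1 =>
      if α < walk C α β n then sInf {γ ∈ C (walk C α β n) | α ≤ γ} else α

/-- `ρ₂(α,β)`: the number of steps of the walk from `β` down to `α`. -/
def rho2 (C : Ordinal → Set Ordinal) (α β : Ordinal) : ℕ :=
  sInf {n : ℕ | walk C α β n = α}

/-- `λ₂(α,β) = sup (α ∩ {sup (C_δ ∩ α) : δ ∈ im (tr (α,β))})`. -/
def lambda2 (C : Ordinal → Set Ordinal) (α β : Ordinal) : Ordinal :=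
  sSup {x : Ordinal | x < α ∧
    ∃ n < rho2 C α β, x = sSup (C (walk C α β n) ∩ Set.Iio α)}

/-- The set of accumulation points of `s` that belong to `s`. -/
def accSet (s : Set Ordinal) : Set Ordinal :=
  {δ ∈ s | 0 < δ ∧ ∀ x < δ, ∃ y ∈ s, x < y ∧ y < δ}

/-- `c` is a closed coloring: for all `β < κ` and `i ≤ θ`, the set
`{α < β : c α β ≤ i}` contains all of its accumulation points below `β`. -/
def ClosedColoring (κ θ : Cardinal) (c : Ordinal → Ordinal → Ordinal) : Prop :=
  ∀ β < κ.ord, ∀ i ≤ θ.ord, ∀ γ < β, 0 < γ →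
    (∀ x < γ, ∃ α, x < α ∧ α < γ ∧ c α β ≤ i) → c γ β ≤ i

/-! `λ₂(γ,β) < γ`, being the maximum of finitely many ordinals below `γ`, so some `α` with
`ρ₂(α,β) ≤ i` lies in `(λ₂(γ,β), γ)`. No `C_δ` with `δ` on the walk from `β` to `γ` (the last one
excepted) meets `[α, γ)`, so the walk from `β` to `α` passes through the same first `ρ₂(γ,β)`
points, all above `γ`; hence `ρ₂(γ,β) ≤ ρ₂(α,β) ≤ i`. -/

variable {κ : Cardinal} {C : Ordinal → Set Ordinal} {α β γ δ : Ordinal} {n : ℕ}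

namespace IsCSeq

variable (hC : IsCSeq κ C)
include hC

theorem subset_Iio (hδ : δ < κ.ord) : C δ ⊆ Iio δ := by
  obtain ⟨hzero, hsucc, hlim⟩ := hC
  rcases zero_or_succ_or_isSuccLimit δ with rfl | ⟨ξ, rfl⟩ | hδlim
  · simp [hzero]
  · simp [hsucc]
  · exact (hlim δ hδ hδlim).1

theorem exists_mem_ge (hδ : δ < κ.ord) (hγδ : γ < δ) : ∃ x ∈ C δ, γ ≤ x := by
  obtain ⟨-, hsucc, hlim⟩ := hC
  rcases zero_or_succ_or_isSuccLimit δ with rfl | ⟨ξ, rfl⟩ | hδlim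
  · exact absurd hγδ not_lt_zero
  · exact ⟨ξ, by simp [hsucc], Order.lt_succ_iff.mp hγδ⟩
  · exact (hlim δ hδ hδlim).2.1 γ hγδ

theorem mem_of_forall_exists_mem_between (hδ : δ < κ.ord) (hγδ : γ < δ) (hγ : 0 < γ)
    (hacc : ∀ x < γ, ∃ y ∈ C δ, x < y ∧ y < γ) : γ ∈ C δ := by
  obtain ⟨-, hsucc, hlim⟩ := hC
  rcases zero_or_succ_or_isSuccLimit δ with rfl | ⟨ξ, rfl⟩ | hδlim
  · exact absurd hγδ not_lt_zero
  · -- a singleton has no accumulation points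
    rw [Order.succ_eq_add_one, hsucc] at hacc
    obtain ⟨y, hy, -, hyγ⟩ := hacc 0 hγ
    obtain ⟨z, hz, hyz, -⟩ := hacc y hyγ
    exact (hyz.ne (hy.trans hz.symm)).elim
  · exact (hlim δ hδ hδlim).2.2 γ hγδ hγ hacc

theorem sInf_mem_ge (hδ : δ < κ.ord) (hγδ : γ < δ) :
    sInf {x ∈ C δ | γ ≤ x} ∈ {x ∈ C δ | γ ≤ x} :=
  csInf_mem (hC.exists_mem_ge hδ hγδ)

end IsCSeq

theorem walk_succ_of_lt (h : α < walk C α β n) :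
    walk C α β (n + 1) = sInf {x ∈ C (walk C α β n) | α ≤ x} := if_pos h

section Walk

variable (hC : IsCSeq κ C) (hαβ : α ≤ β) (hβ : β < κ.ord)
include hC hαβ hβ

theorem walk_mem_Icc : ∀ n, walk C α β n ∈ Icc α β
  | 0 => ⟨hαβ, le_rfl⟩
  | n + 1 => by
    have ih := walk_mem_Icc n
    by_cases h : α < walk C α β n
    · have hδ := ih.2.trans_lt hβ
      rw [walk_succ_of_lt h]
      exact ⟨(hC.sInf_mem_ge hδ h).2,
        ((hC.subset_Iio hδ (hC.sInf_mem_ge hδ h).1).le.trans ih.2)⟩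
    · rw [walk, if_neg h]
      exact ⟨le_rfl, hαβ⟩

theorem walk_succ_lt (h : α < walk C α β n) : walk C α β (n + 1) < walk C α β n := by
  have hδ := (walk_mem_Icc hC hαβ hβ n).2.trans_lt hβ
  rw [walk_succ_of_lt h]
  exact hC.subset_Iio hδ (hC.sInf_mem_ge hδ h).1

theorem exists_walk_eq : ∃ n, walk C α β n = α := by
  obtain ⟨_, ⟨n, rfl⟩, hmin⟩ := wellFounded_lt.has_min (range (walk C α β)) ⟨β, 0, rfl⟩
  refine ⟨n, ((walk_mem_Icc hC hαβ hβ n).1.eq_or_lt).elim Eq.symm fun h => ?_⟩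
  exact absurd (walk_succ_lt hC hαβ hβ h) (hmin _ ⟨n + 1, rfl⟩)

theorem walk_rho2 : walk C α β (rho2 C α β) = α :=
  Nat.sInf_mem (exists_walk_eq hC hαβ hβ)

theorem lt_walk_of_lt_rho2 (hn : n < rho2 C α β) : α < walk C α β n :=
  (walk_mem_Icc hC hαβ hβ n).1.lt_of_ne fun h => Nat.notMem_of_lt_sInf hn h.symm

end Walk

theorem lambda2_lt (hγ : 0 < γ) : lambda2 C γ β < γ := by
  set S := {x : Ordinal | x < γ ∧
    ∃ n < rho2 C γ β, x = sSup (C (walk C γ β n) ∩ Iio γ)}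
  have hfin : S.Finite :=
    ((finite_lt_nat (rho2 C γ β)).image fun n => sSup (C (walk C γ β n) ∩ Iio γ)).subset
      fun x ⟨_, n, hn, hx⟩ => ⟨n, hn, hx.symm⟩
  change sSup S < γ
  rcases S.eq_empty_or_nonempty with hS | hS
  · rwa [hS, csSup_empty]
  · exact (hS.csSup_mem hfin).1

theorem sSup_inter_Iio_le_lambda2 (hn : n < rho2 C γ β)
    (hlt : sSup (C (walk C γ β n) ∩ Iio γ) < γ) :
    sSup (C (walk C γ β n) ∩ Iio γ) ≤ lambda2 C γ β :=
  le_csSup ⟨γ, fun _ hx => hx.1.le⟩ ⟨hlt, n, hn, rfl⟩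

section Lambda2

variable (hC : IsCSeq κ C) (hγβ : γ < β) (hβ : β < κ.ord) (hγ : 0 < γ)
include hC hγβ hβ hγ

/-- Before the last step of the walk, `γ` is not a limit point of `C_δ`: otherwise `γ ∈ C_δ`
and the walk would reach `γ` one step earlier. -/
theorem sSup_inter_Iio_lt (hn : n + 1 < rho2 C γ β) :
    sSup (C (walk C γ β n) ∩ Iio γ) < γ := by
  have hwalk := lt_walk_of_lt_rho2 hC hγβ.le hβ (n.lt_succ_self.trans hn)
  have hδ := (walk_mem_Icc hC hγβ.le hβ n).2.trans_lt hβ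
  refine (csSup_le' fun _ hx => hx.2.le).lt_of_ne fun hsup => ?_
  have hmem : γ ∈ C (walk C γ β n) := by
    refine hC.mem_of_forall_exists_mem_between hδ hwalk hγ fun x hx => ?_
    obtain ⟨y, hy, hxy⟩ := exists_lt_of_lt_csSup
      (nonempty_iff_ne_empty.mpr fun h => hγ.ne (by simpa [h] using hsup)) (hsup ▸ hx)
    exact ⟨y, hy.1, hxy, hy.2⟩
  have hstep : walk C γ β (n + 1) = γ := by
    rw [walk_succ_of_lt hwalk]
    exact le_antisymm (csInf_le' ⟨hmem, le_rfl⟩) (le_csInf ⟨γ, hmem, le_rfl⟩ fun _ hx => hx.2)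
  exact (lt_walk_of_lt_rho2 hC hγβ.le hβ hn).ne' hstep

theorem le_lambda2_of_mem (hn : n + 1 < rho2 C γ β) {x : Ordinal}
    (hx : x ∈ C (walk C γ β n)) (hxγ : x < γ) : x ≤ lambda2 C γ β :=
  (le_csSup (s := C (walk C γ β n) ∩ Iio γ) ⟨γ, fun _ hy => hy.2.le⟩ ⟨hx, hxγ⟩).trans
    (sSup_inter_Iio_le_lambda2 (n.lt_succ_self.trans hn) (sSup_inter_Iio_lt hC hγβ hβ hγ hn))

variable (hα : lambda2 C γ β < α) (hαγ : α < γ)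
include hα hαγ

theorem walk_eq_walk_of_lambda2_lt : ∀ n < rho2 C γ β, walk C α β n = walk C γ β n
  | 0, _ => rfl
  | n + 1, hn => by
    have ih := walk_eq_walk_of_lambda2_lt n (n.lt_succ_self.trans hn)
    have hγn := lt_walk_of_lt_rho2 hC hγβ.le hβ (n.lt_succ_self.trans hn)
    have hset : {x ∈ C (walk C γ β n) | α ≤ x} = {x ∈ C (walk C γ β n) | γ ≤ x} := by
      ext x
      constructor
      · rintro ⟨hx, hαx⟩
        refine ⟨hx, not_lt.mp fun hxγ => ?_⟩
        exact (le_lambda2_of_mem hC hγβ hβ hγ hn hx hxγ).not_gt (hα.trans_le hαx)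
      · rintro ⟨hx, hγx⟩
        exact ⟨hx, hαγ.le.trans hγx⟩
    rw [walk_succ_of_lt (ih ▸ hαγ.trans hγn), walk_succ_of_lt hγn, ih, hset]

theorem rho2_le_rho2_of_lambda2_lt : rho2 C γ β ≤ rho2 C α β := by
  have hαβ := hαγ.trans hγβ
  by_contra! h
  have hwalk := walk_eq_walk_of_lambda2_lt hC hγβ hβ hγ hα hαγ _ h
  rw [walk_rho2 hC hαβ.le hβ] at hwalk
  exact (hαγ.trans (lt_walk_of_lt_rho2 hC hγβ.le hβ h)).ne hwalk

end Lambda2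

theorem stmt12_general (κ : Cardinal) (C : Ordinal → Set Ordinal)
    (hC : IsCSeq κ C) :
    ∀ β < κ.ord, ∀ i : ℕ, ∀ A : Set Ordinal,
      (∀ α ∈ A, α < β ∧ rho2 C α β ≤ i) →
      ∀ γ, γ = sSup A → γ < β → 0 < γ →
        (∀ x < γ, ∃ δ ∈ A, x < δ ∧ δ < γ) → rho2 C γ β ≤ i := by
  intro β hβ i A hA γ _ hγβ hγ hacc
  obtain ⟨α, hαA, hα, hαγ⟩ := hacc (lambda2 C γ β) (lambda2_lt hγ)
  calc rho2 C γ β ≤ rho2 C α β := rho2_le_rho2_of_lambda2_lt hC hγβ hβ hγ hα hαγ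
    _ ≤ i := (hA α hαA).2

theorem stmt12 (κ : Cardinal) (C : Ordinal → Set Ordinal)
    (hκreg : κ.IsRegular) (hκunc : ℵ₀ < κ) (hC : IsCSeq κ C) :
    ∀ β < κ.ord, ∀ i : ℕ, ∀ A : Set Ordinal,
      (∀ α ∈ A, α < β ∧ rho2 C α β ≤ i) →
      ∀ γ, γ = sSup A → γ < β → 0 < γ →
        (∀ x < γ, ∃ δ ∈ A, x < δ ∧ δ < γ) → rho2 C γ β ≤ i :=
  stmt12_general κ C hC
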